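/- arXiv:math/0703923 — 6 statements merged into one kernel-verified Lean document; each statement's English description precedes it below -/
import Mathlib

section
/- Every ultrametric space has asymptotic dimension 0. -/
/-- Every ultrametric space has asymptotic dimension 0: for every `d > 0` there is a
uniformly bounded cover of `X` such that every `d`-ball meets at most one element of
the cover. -/
theorem ultrametric_asdim_zero {X : Type*} [MetricSpace X]
    (hultra : ∀ x y z : X, dist x z ≤ max (dist x y) (dist y z)) :
    ∀ d : ℝ, 0 < d → ∃ (C : Set (Set X)) (R : ℝ),
      (∀ x : X, ∃ s ∈ C, x ∈ s) ∧
      (∀ s ∈ C, ∀ x ∈ s, ∀ y ∈ s, dist x y ≤ R) ∧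
      (∀ x : X, ∀ s ∈ C, ∀ t ∈ C,
        (Metric.ball x d ∩ s).Nonempty → (Metric.ball x d ∩ t).Nonempty → s = t) := by
  intro d hd
  refine ⟨{ s | ∃ p : X, s = {y | dist p y ≤ 2 * d} }, 2 * d, ?_, ?_, ?_⟩
  · intro x
    exact ⟨{y | dist x y ≤ 2 * d}, ⟨x, rfl⟩, by simp; linarith⟩
  · rintro s ⟨p, rfl⟩ x hx y hy
    calc dist x y ≤ max (dist x p) (dist p y) := hultra x p y
    _ ≤ 2 * d := by
        apply max_le
        · rw [dist_comm]; exact hx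
        · exact hy
  · rintro x s ⟨p, rfl⟩ t ⟨q, rfl⟩ ⟨a, ha, hap⟩ ⟨b, hb, hbq⟩
    have hab : dist a b ≤ 2 * d := by
      have := hultra a x b
      have h1 : dist a x < d := Metric.mem_ball.mp ha
      have h2 : dist x b < d := Metric.mem_ball'.mp hb
      calc dist a b ≤ max (dist a x) (dist x b) := this
      _ ≤ 2 * d := by apply max_le <;> linarith
    have hpq : dist p q ≤ 2 * d := by
      have h1 : dist p b ≤ max (dist p a) (dist a b) := hultra p a b
      have h2 : dist p q ≤ max (dist p b) (dist b q) := hultra p b q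
      have hbq' : dist b q ≤ 2 * d := by rw [dist_comm]; exact hbq
      have : dist p b ≤ 2 * d := le_trans h1 (max_le hap hab)
      exact le_trans h2 (max_le this hbq')
    ext y
    simp only [Set.mem_setOf_eq]
    constructor
    · intro hy
      calc dist q y ≤ max (dist q p) (dist p y) := hultra q p y
      _ ≤ 2 * d := max_le (by rw [dist_comm]; exact hpq) hy
    · intro hy
      calc dist p y ≤ max (dist p q) (dist q y) := hultra p q y
      _ ≤ 2 * d := max_le hpq hy
end

section
/- Let K be a field with a discrete valuation ν. Define on the group N of uni-upper-triangular 3×3 matrices over K the function l̃(g) = -min{0, ν(x), ν(y), (1/2)ν(z), (1/2)ν(xy - z)} where g has above-diagonal entries x (position 1,2), y (position 2,3), z (position 1,3). Then l̃ is subadditive in the strong sense: l̃(gh) ≤ max{l̃(g), l̃(h)} for all g, h ∈ N. -/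
open scoped Matrix

/-- The canonical embedding of `ℤ ∪ {+∞}` into the extended reals. -/
noncomputable def toEReal (v : WithTop ℤ) : EReal :=
  if h : v = ⊤ then ⊤ else (((v.untop h : ℤ) : ℝ) : EReal)

/-- The modified length `l̃` on the group `N` of uni-upper-triangular `3×3` matrices
`[[1,x,z],[0,1,y],[0,0,1]]`:
`l̃(g) = -min{0, ν(x), ν(y), (1/2)ν(z), (1/2)ν(xy-z)}`. -/
noncomputable def ltilde {K : Type*} [Field K] (ν : K → WithTop ℤ) (x y z : K) : EReal :=
  -(min 0 (min (toEReal (ν x)) (min (toEReal (ν y))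
      (min (((1 / 2 : ℝ) : EReal) * toEReal (ν z))
           (((1 / 2 : ℝ) : EReal) * toEReal (ν (x * y - z)))))))

@[simp] lemma toEReal_top : toEReal ⊤ = ⊤ := rfl

@[simp] lemma toEReal_coe (n : ℤ) : toEReal (n : WithTop ℤ) = ((n : ℝ) : EReal) := by
  simp [toEReal]

lemma toEReal_ne_bot (v : WithTop ℤ) : toEReal v ≠ ⊥ := by
  induction v using WithTop.recTopCoe <;> simp

lemma toEReal_mono : Monotone toEReal := by
  intro a b h
  induction b using WithTop.recTopCoe with
  | top => simp
  | coe n =>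
    induction a using WithTop.recTopCoe with
    | top => simp [top_le_iff, WithTop.coe_ne_top] at h
    | coe m =>
      rw [toEReal_coe, toEReal_coe, EReal.coe_le_coe_iff]
      exact_mod_cast WithTop.coe_le_coe.mp h

lemma toEReal_add (a b : WithTop ℤ) : toEReal (a + b) = toEReal a + toEReal b := by
  induction a using WithTop.recTopCoe with
  | top => simp [top_add, EReal.top_add_of_ne_bot (toEReal_ne_bot b)]
  | coe m =>
    induction b using WithTop.recTopCoe with
    | top => simp [add_top, EReal.add_top_of_ne_bot (toEReal_ne_bot _)]
    | coe n =>
      rw [← WithTop.coe_add, toEReal_coe, toEReal_coe, toEReal_coe]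
      push_cast
      rfl

lemma toEReal_min (a b : WithTop ℤ) : toEReal (min a b) = min (toEReal a) (toEReal b) :=
  toEReal_mono.map_min

lemma half_le_iff (M : ℝ) (t : WithTop ℤ) :
    (M : EReal) ≤ ((1 / 2 : ℝ) : EReal) * toEReal t ↔ ((2 * M : ℝ) : EReal) ≤ toEReal t := by
  induction t using WithTop.recTopCoe with
  | top =>
    rw [toEReal_top, EReal.coe_mul_top_of_pos (by norm_num : (0:ℝ) < 1/2)]
    simp
  | coe n =>
    rw [toEReal_coe, ← EReal.coe_mul, EReal.coe_le_coe_iff, EReal.coe_le_coe_iff]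
    constructor <;> intro <;> linarith

lemma half_ne_bot (t : WithTop ℤ) : ((1 / 2 : ℝ) : EReal) * toEReal t ≠ ⊥ := by
  induction t using WithTop.recTopCoe with
  | top =>
    rw [toEReal_top, EReal.coe_mul_top_of_pos (by norm_num : (0:ℝ) < 1/2)]
    simp
  | coe n => rw [toEReal_coe, ← EReal.coe_mul]; exact EReal.coe_ne_bot _

lemma twoM (M : ℝ) {a b : WithTop ℤ} (ha : (M : EReal) ≤ toEReal a)
    (hb : (M : EReal) ≤ toEReal b) : ((2 * M : ℝ) : EReal) ≤ toEReal (a + b) := by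
  rw [toEReal_add, two_mul, EReal.coe_add]
  exact add_le_add ha hb


/-- `l̃` satisfies the strong (ultrametric) subadditivity `l̃(gh) ≤ max{l̃(g), l̃(h)}` on
the group of uni-upper-triangular `3×3` matrices; here `g` has entries `(x,y,z)`, `h`
has entries `(u,v,w)`, and `gh` has entries `(x+u, y+v, xv+z+w)`. -/
theorem ltilde_strong_subadditive {K : Type*} [Field K]
    (ν : K → WithTop ℤ)
    (h0 : ∀ a : K, ν a = ⊤ ↔ a = 0)
    (hmul : ∀ a b : K, ν (a * b) = ν a + ν b)
    (hadd : ∀ a b : K, min (ν a) (ν b) ≤ ν (a + b))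
    (x y z u v w : K) :
    ltilde ν (x + u) (y + v) (x * v + z + w) ≤ max (ltilde ν x y z) (ltilde ν u v w) := by
  have haddE : ∀ a b : K, min (toEReal (ν a)) (toEReal (ν b)) ≤ toEReal (ν (a + b)) := by
    intro a b
    rw [← toEReal_min]
    exact toEReal_mono (hadd a b)
  have hmulE : ∀ a b : K, toEReal (ν (a * b)) = toEReal (ν a) + toEReal (ν b) := by
    intro a b
    rw [hmul, toEReal_add]
  unfold ltilde
  set P := min (0:EReal) (min (toEReal (ν x)) (min (toEReal (ν y))
      (min (((1 / 2 : ℝ) : EReal) * toEReal (ν z))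
           (((1 / 2 : ℝ) : EReal) * toEReal (ν (x * y - z)))))) with hP
  set Q := min (0:EReal) (min (toEReal (ν u)) (min (toEReal (ν v))
      (min (((1 / 2 : ℝ) : EReal) * toEReal (ν w))
           (((1 / 2 : ℝ) : EReal) * toEReal (ν (u * v - w)))))) with hQ
  have hbot : ∀ a b c : K, (⊥:EReal) < min (0:EReal) (min (toEReal (ν a)) (min (toEReal (ν b))
      (min (((1 / 2 : ℝ) : EReal) * toEReal (ν c))
           (((1 / 2 : ℝ) : EReal) * toEReal (ν (a * b - c)))))) := by
    intro a b c
    exact lt_min (by simp) (lt_min (bot_lt_iff_ne_bot.mpr (toEReal_ne_bot _))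
      (lt_min (bot_lt_iff_ne_bot.mpr (toEReal_ne_bot _))
        (lt_min (bot_lt_iff_ne_bot.mpr (half_ne_bot _)) (bot_lt_iff_ne_bot.mpr (half_ne_bot _)))))
  have hne_bot : min P Q ≠ ⊥ := (lt_min (hbot x y z) (hbot u v w)).ne'
  have hle0 : min P Q ≤ 0 := le_trans (min_le_left P Q) (min_le_left _ _)
  have hne_top : min P Q ≠ ⊤ := (lt_of_le_of_lt hle0 (by simp)).ne
  obtain ⟨M, hM⟩ : ∃ M : ℝ, (M : EReal) = min P Q := ⟨(min P Q).toReal,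
    EReal.coe_toReal hne_top hne_bot⟩
  -- basic bounds
  have hx : (M : EReal) ≤ toEReal (ν x) := hM ▸ le_trans (min_le_left P Q)
    (le_trans (min_le_right _ _) (min_le_left _ _))
  have hy : (M : EReal) ≤ toEReal (ν y) := hM ▸ le_trans (min_le_left P Q)
    (le_trans (min_le_right _ _) (le_trans (min_le_right _ _) (min_le_left _ _)))
  have hu : (M : EReal) ≤ toEReal (ν u) := hM ▸ le_trans (min_le_right P Q)
    (le_trans (min_le_right _ _) (min_le_left _ _))
  have hv : (M : EReal) ≤ toEReal (ν v) := hM ▸ le_trans (min_le_right P Q)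
    (le_trans (min_le_right _ _) (le_trans (min_le_right _ _) (min_le_left _ _)))
  have hz : ((2 * M : ℝ) : EReal) ≤ toEReal (ν z) := by
    rw [← half_le_iff]
    exact hM ▸ le_trans (min_le_left P Q) (le_trans (min_le_right _ _)
      (le_trans (min_le_right _ _) (le_trans (min_le_right _ _) (min_le_left _ _))))
  have hxyz : ((2 * M : ℝ) : EReal) ≤ toEReal (ν (x * y - z)) := by
    rw [← half_le_iff]
    exact hM ▸ le_trans (min_le_left P Q) (le_trans (min_le_right _ _)
      (le_trans (min_le_right _ _) (le_trans (min_le_right _ _) (min_le_right _ _))))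
  have hw : ((2 * M : ℝ) : EReal) ≤ toEReal (ν w) := by
    rw [← half_le_iff]
    exact hM ▸ le_trans (min_le_right P Q) (le_trans (min_le_right _ _)
      (le_trans (min_le_right _ _) (le_trans (min_le_right _ _) (min_le_left _ _))))
  have huvw : ((2 * M : ℝ) : EReal) ≤ toEReal (ν (u * v - w)) := by
    rw [← half_le_iff]
    exact hM ▸ le_trans (min_le_right P Q) (le_trans (min_le_right _ _)
      (le_trans (min_le_right _ _) (le_trans (min_le_right _ _) (min_le_right _ _))))
  -- the main inequality on mins
  have key : min P Q ≤ min (0:EReal) (min (toEReal (ν (x + u))) (min (toEReal (ν (y + v)))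
      (min (((1 / 2 : ℝ) : EReal) * toEReal (ν (x * v + z + w)))
           (((1 / 2 : ℝ) : EReal) * toEReal (ν ((x + u) * (y + v) - (x * v + z + w))))))) := by
    rw [← hM]
    refine le_min ?_ (le_min ?_ (le_min ?_ (le_min ?_ ?_)))
    · exact hM ▸ hle0
    · exact le_trans (le_min hx hu) (haddE x u)
    · exact le_trans (le_min hy hv) (haddE y v)
    · rw [half_le_iff]
      have h1 : ((2 * M : ℝ) : EReal) ≤ toEReal (ν (x * v)) := by
        rw [hmul]; exact twoM M hx hv
      refine le_trans (le_min (le_trans (le_min h1 hz) (haddE (x * v) z)) hw) (haddE _ w)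
    · rw [half_le_iff]
      have hid : (x + u) * (y + v) - (x * v + z + w) = ((x * y - z) + u * y) + (u * v - w) := by
        ring
      rw [hid]
      have h1 : ((2 * M : ℝ) : EReal) ≤ toEReal (ν (u * y)) := by
        rw [hmul]; exact twoM M hu hy
      exact le_trans (le_min (le_trans (le_min hxyz h1) (haddE (x * y - z) (u * y))) huvw)
        (haddE _ (u * v - w))
  -- conclude
  have h1 : -(min (0:EReal) (min (toEReal (ν (x + u))) (min (toEReal (ν (y + v)))
      (min (((1 / 2 : ℝ) : EReal) * toEReal (ν (x * v + z + w)))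
           (((1 / 2 : ℝ) : EReal) * toEReal (ν ((x + u) * (y + v) - (x * v + z + w)))))))) ≤
      -(min P Q) := EReal.neg_le_neg_iff.mpr key
  refine le_trans h1 ?_
  rcases min_cases P Q with ⟨hm, _⟩ | ⟨hm, _⟩ <;> rw [hm]
  · exact le_max_left _ _
  · exact le_max_right _ _
end

section
/- With l and l̃ as above on the group N of 3×3 uni-upper-triangular matrices over a discretely valued field, for every g ∈ N one has l̃(g) ≤ l(g) ≤ 2·l̃(g). -/
/-- The length `l` on the group `N` of uni-upper-triangular `3×3` matrices
`[[1,x,z],[0,1,y],[0,0,1]]`: `l(g) = -min{0, ν(x), ν(y), ν(z), ν(xy-z)}`. -/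
noncomputable def lN {K : Type*} [Field K] (ν : K → WithTop ℤ) (x y z : K) : EReal :=
  -(min 0 (min (toEReal (ν x)) (min (toEReal (ν y))
      (min (toEReal (ν z)) (toEReal (ν (x * y - z)))))))

private lemma coe_min' (s r : ℝ) : min (s : EReal) (r : EReal) = ((min s r : ℝ) : EReal) :=
  (Monotone.map_min (fun _ _ hab => EReal.coe_le_coe_iff.2 hab)).symm

/-- helper: `min 0 c ≤ (1/2)·c` for `c = toEReal v`. -/
private lemma half_ge_min (v : WithTop ℤ) :
    min 0 (toEReal v) ≤ ((1 / 2 : ℝ) : EReal) * toEReal v := by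
  unfold toEReal
  split
  · rw [EReal.coe_mul_top_of_pos (by norm_num)]; exact le_top
  · rename_i h
    set r : ℝ := ((v.untop h : ℤ) : ℝ)
    rw [← EReal.coe_mul, show (0 : EReal) = ((0 : ℝ) : EReal) from rfl, coe_min']
    apply EReal.coe_le_coe_iff.2
    rcases le_or_gt 0 r with hr | hr
    · rw [min_eq_left hr]; linarith
    · rw [min_eq_right hr.le]; linarith

/-- helper: `2 · min 0 c ≤ c` for `c = toEReal v`. -/
private lemma two_min_le (v : WithTop ℤ) :
    2 * min 0 (toEReal v) ≤ toEReal v := by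
  unfold toEReal
  split
  · exact le_top
  · rename_i h
    set r : ℝ := ((v.untop h : ℤ) : ℝ)
    rw [show (0 : EReal) = ((0 : ℝ) : EReal) from rfl, coe_min',
      show (2 : EReal) = ((2 : ℝ) : EReal) by norm_cast, ← EReal.coe_mul]
    apply EReal.coe_le_coe_iff.2
    rcases le_or_gt 0 r with hr | hr
    · rw [min_eq_left hr]; linarith
    · rw [min_eq_right hr.le]; linarith

/-- helper: `2 · t ≤ 0` when `t ≤ 0`. -/
private lemma two_nonpos {t : EReal} (h : t ≤ 0) : 2 * t ≤ 0 := by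
  calc 2 * t ≤ 2 * 0 := mul_le_mul_of_nonneg_left h (by norm_num)
    _ = 0 := mul_zero 2

/-- helper: `2 · ((1/2)·c) = c` for `c = toEReal v`. -/
private lemma two_mul_half (v : WithTop ℤ) :
    2 * (((1 / 2 : ℝ) : EReal) * toEReal v) = toEReal v := by
  rw [← mul_assoc, show (2 : EReal) = ((2 : ℝ) : EReal) by norm_cast, ← EReal.coe_mul]
  norm_num

/-- For every uni-upper-triangular `3×3` matrix `g` (with entries `x, y, z`) over a
discretely valued field one has `l̃(g) ≤ l(g) ≤ 2·l̃(g)`. -/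
theorem ltilde_le_l_le_two_ltilde {K : Type*} [Field K]
    (ν : K → WithTop ℤ)
    (h0 : ∀ a : K, ν a = ⊤ ↔ a = 0)
    (hmul : ∀ a b : K, ν (a * b) = ν a + ν b)
    (hadd : ∀ a b : K, min (ν a) (ν b) ≤ ν (a + b))
    (x y z : K) :
    ltilde ν x y z ≤ lN ν x y z ∧ lN ν x y z ≤ 2 * ltilde ν x y z := by
  unfold ltilde lN
  set a := toEReal (ν x) with ha
  set b := toEReal (ν y) with hb
  set c := toEReal (ν z) with hc
  set d := toEReal (ν (x * y - z)) with hd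
  set m := min 0 (min a (min b (min c d))) with hm
  set mt := min 0 (min a (min b (min (((1 / 2 : ℝ) : EReal) * c)
      (((1 / 2 : ℝ) : EReal) * d)))) with hmt
  have mt_le : ∀ t : EReal, (t = 0 ∨ t = a ∨ t = b ∨ t = ((1 / 2 : ℝ) : EReal) * c ∨
      t = ((1 / 2 : ℝ) : EReal) * d) → mt ≤ t := by
    rintro t (rfl | rfl | rfl | rfl | rfl)
    · exact min_le_left _ _
    · exact le_trans (min_le_right _ _) (min_le_left _ _)
    · exact le_trans (min_le_right _ _) (le_trans (min_le_right _ _) (min_le_left _ _))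
    · exact le_trans (min_le_right _ _) (le_trans (min_le_right _ _)
        (le_trans (min_le_right _ _) (min_le_left _ _)))
    · exact le_trans (min_le_right _ _) (le_trans (min_le_right _ _)
        (le_trans (min_le_right _ _) (min_le_right _ _)))
  have m_le : ∀ t : EReal, (t = 0 ∨ t = a ∨ t = b ∨ t = c ∨ t = d) → m ≤ t := by
    rintro t (rfl | rfl | rfl | rfl | rfl)
    · exact min_le_left _ _
    · exact le_trans (min_le_right _ _) (min_le_left _ _)
    · exact le_trans (min_le_right _ _) (le_trans (min_le_right _ _) (min_le_left _ _))
    · exact le_trans (min_le_right _ _) (le_trans (min_le_right _ _)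
        (le_trans (min_le_right _ _) (min_le_left _ _)))
    · exact le_trans (min_le_right _ _) (le_trans (min_le_right _ _)
        (le_trans (min_le_right _ _) (min_le_right _ _)))
  constructor
  · apply EReal.neg_le_neg_iff.2
    apply le_min (m_le 0 (by tauto))
    apply le_min (m_le a (by tauto))
    apply le_min (m_le b (by tauto))
    apply le_min
    · exact le_trans (le_min (m_le 0 (by tauto)) (m_le c (by tauto))) (half_ge_min (ν z))
    · exact le_trans (le_min (m_le 0 (by tauto)) (m_le d (by tauto)))
        (half_ge_min (ν (x * y - z)))
  · rw [show (2 : EReal) * -mt = -(2 * mt) by rw [mul_comm, EReal.neg_mul, mul_comm]]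
    apply EReal.neg_le_neg_iff.2
    have two_mono : ∀ s t : EReal, s ≤ t → 2 * s ≤ 2 * t := fun s t h =>
      mul_le_mul_of_nonneg_left h (by norm_num)
    apply le_min (two_nonpos (mt_le 0 (by tauto)))
    apply le_min
    · calc 2 * mt ≤ 2 * min 0 a :=
            two_mono _ _ (le_min (mt_le 0 (by tauto)) (mt_le a (by tauto)))
        _ ≤ a := two_min_le (ν x)
    apply le_min
    · calc 2 * mt ≤ 2 * min 0 b :=
            two_mono _ _ (le_min (mt_le 0 (by tauto)) (mt_le b (by tauto)))
        _ ≤ b := two_min_le (ν y)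
    apply le_min
    · calc 2 * mt ≤ 2 * (((1 / 2 : ℝ) : EReal) * c) :=
            two_mono _ _ (mt_le _ (by tauto))
        _ = c := two_mul_half (ν z)
    · calc 2 * mt ≤ 2 * (((1 / 2 : ℝ) : EReal) * d) :=
            two_mono _ _ (mt_le _ (by tauto))
        _ = d := two_mul_half (ν (x * y - z))
end

section
/- Let K be a field and p₁,…,p_n ∈ K[t₁,…,t_k] be linearly independent over K. Choose n mutually disjoint families of fresh indeterminates and substitute the i-th family into each polynomial to get entries p_j(row i). Then the determinant of the n×n matrix with (i,j)-entry p_j evaluated at the i-th family of indeterminates is a nonzero element of the polynomial ring in all n·k indeterminates. -/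
/-!
Viewing each `p j` as its coefficient function, linear independence yields exponents
`d₁, …, d_n` with `det (coeff dᵢ pⱼ) ≠ 0`: choose them one row at a time, expanding along
the new row, whose cofactor vector is nonzero by induction. Since row `i` of the big matrix
only involves the `i`-th family of variables, the coefficient of the monomial `∏ tᵢ ^ dᵢ`
in its determinant is exactly `det (coeff dᵢ pⱼ)`.
-/

open MvPolynomial

theorem LinearIndependent.exists_det_ne_zero {R α : Type*} [CommRing R] [Nontrivial R] :
    ∀ {n : ℕ} {f : Fin n → α → R}, LinearIndependent R f →
      ∃ x : Fin n → α, (Matrix.of fun i j => f j (x i)).det ≠ 0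
  | 0, _, _ => ⟨Fin.elim0, by simp⟩
  | n + 1, f, hf => by
    obtain ⟨y, hy⟩ := (hf.comp Fin.succ (Fin.succ_injective n)).exists_det_ne_zero
    -- cofactors along the first row; they do not involve the first point
    set c : Fin (n + 1) → R := fun j =>
      (-1) ^ (j : ℕ) * (Matrix.of fun i j' => f (j.succAbove j') (y i)).det
    have hc : ∑ j, c j • f j ≠ 0 := fun h => hy <| by
      simpa [c] using Fintype.linearIndependent_iff.1 hf c h 0
    obtain ⟨x, hx⟩ : ∃ x, ∑ j, c j * f j x ≠ 0 := by simpa [funext_iff] using hc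
    refine ⟨Fin.cons x y, ?_⟩
    rw [Matrix.det_succ_row_zero]
    convert hx using 2 with j
    rw [mul_right_comm]
    rfl

theorem Finsupp.eq_of_add_eq_add_of_support_subset {τ M : Type*} [AddCancelMonoid M] {S : Set τ}
    {a b u v : τ →₀ M} (ha : ↑a.support ⊆ S) (hb : Disjoint ↑b.support S)
    (hu : ↑u.support ⊆ S) (hv : Disjoint ↑v.support S) (h : a + b = u + v) : a = u := by
  ext x
  by_cases hx : x ∈ S
  · simpa [Finsupp.notMem_support_iff.1 (hb.notMem_of_mem_right hx),
      Finsupp.notMem_support_iff.1 (hv.notMem_of_mem_right hx)] using DFunLike.congr_fun h x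
  · rw [Finsupp.notMem_support_iff.1 (fun h => hx (ha h)),
      Finsupp.notMem_support_iff.1 (fun h => hx (hu h))]

theorem Finsupp.support_mapDomain_prodMk_subset {ι σ M : Type*} [AddCommMonoid M] (i : ι)
    (e : σ →₀ M) :
    ((e.mapDomain (Prod.mk i)).support : Set (ι × σ)) ⊆ Prod.fst ⁻¹' {i} := fun x hx => by
  classical
  obtain ⟨t, -, rfl⟩ := Finset.mem_image.1 (Finsupp.mapDomain_support hx)
  rfl

namespace MvPolynomial

variable {R σ τ ι : Type*}

section CommSemiring

variable [CommSemiring R]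

theorem coeff_add_mul_of_vars_subset {S : Set τ} {P Q : MvPolynomial τ R}
    (hP : ↑P.vars ⊆ S) (hQ : Disjoint ↑Q.vars S) {u v : τ →₀ ℕ}
    (hu : ↑u.support ⊆ S) (hv : Disjoint ↑v.support S) :
    coeff (u + v) (P * Q) = coeff u P * coeff v Q := by
  classical
  rw [coeff_mul,
    Finset.sum_eq_single_of_mem (u, v) (Finset.HasAntidiagonal.mem_antidiagonal.2 rfl)]
  rintro ⟨a, b⟩ hab hne
  by_contra hab0
  have support_subset_vars {p : MvPolynomial τ R} {e : τ →₀ ℕ} (he : coeff e p ≠ 0) :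
      ↑e.support ⊆ (p.vars : Set τ) :=
    fun x hx => (mem_vars_iff_mem_support x).2 ⟨e, mem_support_iff.2 he, hx⟩
  have ha := (support_subset_vars (left_ne_zero_of_mul hab0)).trans hP
  have hb := hQ.mono_left (support_subset_vars (right_ne_zero_of_mul hab0))
  have hab := Finset.HasAntidiagonal.mem_antidiagonal.1 hab
  obtain rfl := Finsupp.eq_of_add_eq_add_of_support_subset ha hb hu hv hab
  exact hne (Prod.ext rfl (add_left_cancel hab))

theorem vars_rename_prodMk_subset (i : ι) (q : MvPolynomial σ R) :
    ((rename (Prod.mk i) q).vars : Set (ι × σ)) ⊆ Prod.fst ⁻¹' {i} := fun x hx => by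
  obtain ⟨t, -, rfl⟩ := mem_vars_rename _ _ hx
  rfl

theorem coeff_sum_mapDomain_prod_rename (s : Finset ι) (q : ι → MvPolynomial σ R)
    (d : ι → σ →₀ ℕ) :
    coeff (∑ i ∈ s, (d i).mapDomain (Prod.mk i)) (∏ i ∈ s, rename (Prod.mk i) (q i)) =
      ∏ i ∈ s, coeff (d i) (q i) := by
  classical
  induction s using Finset.induction_on with
  | empty => simp
  | insert a s ha ih =>
    have hs : Disjoint (Prod.fst ⁻¹' ↑s : Set (ι × σ)) (Prod.fst ⁻¹' {a}) :=
      (Set.disjoint_singleton_right.2 ha).preimage Prod.fst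
    rw [Finset.sum_insert ha, Finset.prod_insert ha, Finset.prod_insert ha,
      coeff_add_mul_of_vars_subset (vars_rename_prodMk_subset a (q a)) (hs.mono_left ?_)
        (Finsupp.support_mapDomain_prodMk_subset a (d a)) (hs.mono_left ?_),
      coeff_rename_mapDomain _ (Prod.mk_right_injective a), ih]
    · intro x hx
      obtain ⟨i, hi, hx⟩ := Finset.mem_biUnion.1 (vars_prod _ hx)
      rwa [Set.mem_preimage, Set.mem_singleton_iff.1 (vars_rename_prodMk_subset i (q i) hx)]
    · intro x hx
      obtain ⟨i, hi, hx⟩ := Finset.mem_biUnion.1 (Finsupp.support_finsetSum hx)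
      rwa [Set.mem_preimage,
        Set.mem_singleton_iff.1 (Finsupp.support_mapDomain_prodMk_subset i (d i) hx)]

end CommSemiring

theorem coeff_det_rename_prodMk [CommRing R] [Fintype ι] [DecidableEq ι]
    (p : ι → MvPolynomial σ R) (d : ι → σ →₀ ℕ) :
    coeff (∑ i, (d i).mapDomain (Prod.mk i))
        (Matrix.of fun i j => rename (Prod.mk i) (p j)).det =
      (Matrix.of fun i j => coeff (d i) (p j)).det := by
  rw [← Matrix.det_transpose, Matrix.det_apply, coeff_sum, ← Matrix.det_transpose,
    Matrix.det_apply]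
  refine Finset.sum_congr rfl fun π _ => ?_
  simp only [Matrix.transpose_apply, Matrix.of_apply, coeff_smul]
  rw [coeff_sum_mapDomain_prod_rename Finset.univ (fun i => p (π i)) d]

end MvPolynomial

/-- If `p₁,…,p_n ∈ K[t₁,…,t_k]` are linearly independent over `K`, then the determinant
of the `n×n` matrix whose `(i,j)` entry is `p_j` evaluated in the `i`-th of `n` mutually
disjoint fresh families of indeterminates is a nonzero polynomial in the `n·k`
indeterminates. -/
theorem det_of_substituted_independent_polynomials_ne_zero
    {K : Type*} [Field K] (n k : ℕ) (p : Fin n → MvPolynomial (Fin k) K)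
    (hli : LinearIndependent K p) :
    (Matrix.of fun i j : Fin n =>
        MvPolynomial.rename (fun t : Fin k => ((i, t) : Fin n × Fin k)) (p j)).det ≠ 0 := by
  have hcoeff : LinearIndependent K fun j m => coeff m (p j) :=
    hli.map' (LinearMap.pi fun m => lcoeff K m)
      (LinearMap.ker_eq_bot.2 fun a b h => MvPolynomial.ext a b (congr_fun h))
  obtain ⟨d, hd⟩ := hcoeff.exists_det_ne_zero
  intro h
  rw [← coeff_det_rename_prodMk p d] at hd
  exact hd ((congrArg _ h).trans (coeff_zero _))
end

section
/- (Burnside) If a subgroup G of GL(n,K), K an algebraically closed field, acts irreducibly on K^n, then the K-linear span of G is all of M_n(K); equivalently, G contains n² elements forming a linear basis of M_n(K). -/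
/-!
Since `G` is closed under multiplication, its linear span is the subalgebra `A` it generates,
and `Kⁿ` is a simple `A`-module. By Schur's lemma over an algebraically closed field the
`A`-endomorphisms of `Kⁿ` are scalars, so every `K`-linear map commutes with them, and the Jacobson
density theorem realises it as the action of an element of `A`.
-/

open Module

theorem IsSimpleModule.lsmul_surjective_of_isAlgClosed (k A V : Type*) [Field k] [IsAlgClosed k]
    [Ring A] [Algebra k A] [AddCommGroup V] [Module k V] [Module A V] [IsScalarTower k A V]
    [IsSimpleModule A V] [FiniteDimensional k V] :
    Function.Surjective (Algebra.lsmul k k V : A →ₐ[k] End k V) := by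
  intro f
  have hscalar := IsSimpleModule.algebraMap_end_bijective_of_isAlgClosed k (A := A) (V := V)
  have : Module.Finite (End A V) V := .of_restrictScalars_finite k _ V
  let f' : End (End A V) V :=
    { f with map_smul' := fun φ v => by obtain ⟨c, rfl⟩ := hscalar.2 φ; simp }
  obtain ⟨a, ha⟩ := Module.Finite.toModuleEnd_moduleEnd_surjective f'
  exact ⟨a, LinearMap.ext fun v => congr($ha v)⟩

theorem Algebra.adjoin_eq_top_of_irreducible {k B V : Type*} [Field k] [IsAlgClosed k] [Ring B]
    [Algebra k B] [AddCommGroup V] [Module k V] [Module B V] [IsScalarTower k B V]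
    [FaithfulSMul B V] [FiniteDimensional k V] (s : Set B)
    (hs : ∀ W : Submodule k V, (∀ b ∈ s, ∀ w ∈ W, b • w ∈ W) → W = ⊥ ∨ W = ⊤) :
    Algebra.adjoin k s = ⊤ := by
  cases subsingleton_or_nontrivial V
  · have : Subsingleton B := ⟨fun _ _ => eq_of_smul_eq_smul (α := V) fun _ => Subsingleton.elim _ _⟩
    exact Subsingleton.elim _ _
  set A := Algebra.adjoin k s
  have : IsSimpleModule A V := by
    refine { eq_bot_or_eq_top := fun W => ?_ }
    simpa only [Submodule.restrictScalars_eq_bot_iff, Submodule.restrictScalars_eq_top_iff] using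
      hs (W.restrictScalars k) fun b hb w hw => W.smul_mem ⟨b, Algebra.subset_adjoin hb⟩ hw
  refine Algebra.eq_top_iff.2 fun b => ?_
  obtain ⟨a, ha⟩ := IsSimpleModule.lsmul_surjective_of_isAlgClosed k A V (Algebra.lsmul k k V b)
  have hab : (a : B) = b := eq_of_smul_eq_smul (α := V) (LinearMap.congr_fun ha)
  exact hab ▸ a.2

instance Matrix.faithfulSMul_vec {n R : Type*} [Fintype n] [DecidableEq n] [Semiring R] :
    FaithfulSMul (Matrix n n R) (n → R) :=
  ⟨Matrix.ext_iff_smul.2⟩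

/-- (Burnside) If a subgroup `G` of `GL(n,K)`, `K` algebraically closed, acts
irreducibly on `Kⁿ`, then the `K`-linear span of (the matrices of) `G` is all of
`M_n(K)`. -/
theorem burnside_span_of_irreducible
    {K : Type*} [Field K] [IsAlgClosed K] (n : ℕ)
    (G : Subgroup (GL (Fin n) K))
    (hirr : ∀ W : Submodule K (Fin n → K),
      (∀ g ∈ G, ∀ w ∈ W, ((g : GL (Fin n) K) : Matrix (Fin n) (Fin n) K).mulVec w ∈ W) →
      W = ⊥ ∨ W = ⊤) :
    Submodule.span K
        ((fun g : GL (Fin n) K => ((g : GL (Fin n) K) : Matrix (Fin n) (Fin n) K)) '' G)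
      = ⊤ := by
  have hmonoid : (fun g : GL (Fin n) K => (g : Matrix (Fin n) (Fin n) K)) '' G =
      (G.toSubmonoid.map (Units.coeHom _) : Set (Matrix (Fin n) (Fin n) K)) := rfl
  rw [hmonoid, ← Submonoid.closure_eq (G.toSubmonoid.map _), ← Algebra.adjoin_eq_span,
    Algebra.adjoin_eq_top_of_irreducible (V := Fin n → K) _ ?_, Algebra.top_toSubmodule]
  rintro W hW
  exact hirr W fun g hg => hW _ ⟨g, hg, rfl⟩
end

section
/- Every 2-dimensional Lie subalgebra of sl(2,ℂ) is noncommutative, and is conjugate (under the adjoint action of SL(2,ℂ), i.e. by x ↦ gxg⁻¹ for some g ∈ SL(2,ℂ)) to the subalgebra {[[a,b],[0,-a]] : a, b ∈ ℂ} of upper-triangular trace-zero matrices. -/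
/-!
For a basis `u, v` of `h`, the bracket `w = ⁅u, v⁆` is nonzero, because the centralizer of a
nonzero element of `sl(2)` is a line. Invariance of the trace form gives `tr (w x) = 0` for all
`x ∈ h`, in particular `tr (w ^ 2) = 0`, so `w` is nilpotent and some `g ∈ SL(2)` conjugates it
to a multiple of `!![0, 1; 0, 0]`. Then `tr (w x) = 0` says precisely that `g x g⁻¹` has
vanishing lower left entry, so `g h g⁻¹` lies in the Borel subalgebra, which is 2-dimensional.
-/

attribute [local instance 100] LieRing.ofAssociativeRing

open Module Matrix

theorem Submodule.exists_linearIndependent_pair_span_eq {K V : Type*} [DivisionRing K]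
    [AddCommGroup V] [Module K V] {p : Submodule K V} (hp : finrank K p = 2) :
    ∃ u v : V, LinearIndependent K ![u, v] ∧ span K {u, v} = p := by
  have : Module.Finite K p := finite_of_finrank_eq_succ hp
  let B := finBasisOfFinrankEq K p hp
  have hB : ![(B 0 : V), B 1] = p.subtype ∘ B := by ext i; fin_cases i <;> rfl
  refine ⟨B 0, B 1, hB ▸ B.linearIndependent.map' _ p.ker_subtype, ?_⟩
  rw [← range_cons_cons_empty, hB, Set.range_comp, span_image, B.span_eq, map_subtype_top]

namespace Matrix

variable {n R : Type*} [Fintype n] [DecidableEq n] [CommRing R]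

theorem trace_lie_mul_eq_zero_of_mem_span_pair {u v x : Matrix n n R}
    (hx : x ∈ Submodule.span R {u, v}) : trace (⁅u, v⁆ * x) = 0 := by
  obtain ⟨a, b, rfl⟩ := Submodule.mem_span_pair.mp hx
  have hu : trace (⁅u, v⁆ * u) = 0 := by
    rw [Ring.lie_def, sub_mul, trace_sub, mul_assoc u, trace_mul_comm u, sub_self]
  have hv : trace (⁅u, v⁆ * v) = 0 := by
    rw [Ring.lie_def, sub_mul, trace_sub, mul_assoc v, trace_mul_comm v, sub_self]
  simp only [mul_add, mul_smul_comm, trace_add, trace_smul, hu, hv, smul_zero, add_zero]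

namespace SpecialLinearGroup

noncomputable def conjAlgEquiv (g : SpecialLinearGroup n R) : Matrix n n R ≃ₐ[R] Matrix n n R :=
  MulSemiringAction.toAlgEquiv R _ (ConjAct.toConjAct (toGL g))

theorem conjAlgEquiv_apply (g : SpecialLinearGroup n R) (x : Matrix n n R) :
    conjAlgEquiv g x = g * x * (g⁻¹ : SpecialLinearGroup n R) := by
  simp [conjAlgEquiv, ConjAct.units_smul_def, coe_inv, inv_def]

theorem trace_conjAlgEquiv (g : SpecialLinearGroup n R) (x : Matrix n n R) :
    trace (conjAlgEquiv g x) = trace x := by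
  rw [conjAlgEquiv_apply, trace_mul_cycle, ← coe_mul, inv_mul_cancel, coe_one, one_mul]

end SpecialLinearGroup

end Matrix

open Matrix.SpecialLinearGroup

namespace Matrix

theorem exists_eq_of_trace_eq_zero_fin_two {R : Type*} [AddCommGroup R]
    {x : Matrix (Fin 2) (Fin 2) R} (hx : trace x = 0) : ∃ a b c, x = !![a, b; c, -a] :=
  ⟨x 0 0, x 0 1, x 1 0, by
    rw [trace_fin_two, add_eq_zero_iff_eq_neg'] at hx
    rw [← hx]; exact eta_fin_two x⟩

variable {K : Type*} [Field K]

section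

variable [NeZero (2 : K)]

theorem mul_self_eq_zero_of_trace_eq_zero_fin_two {w : Matrix (Fin 2) (Fin 2) K} (h1 : trace w = 0)
    (h2 : trace (w * w) = 0) : w * w = 0 := by
  obtain ⟨a, b, c, rfl⟩ := exists_eq_of_trace_eq_zero_fin_two h1
  have hdet : a * a + b * c = 0 := by
    rw [mul_fin_two, trace_fin_two_of] at h2
    exact (mul_eq_zero.mp (by linear_combination h2 : (2 : K) * (a * a + b * c) = 0)).resolve_left
      two_ne_zero
  rw [mul_fin_two]
  ext i j; fin_cases i <;> fin_cases j <;> simp <;> first | linear_combination hdet | ring1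

theorem lie_ne_zero_of_linearIndependent_fin_two {u v : Matrix (Fin 2) (Fin 2) K} (hu : trace u = 0)
    (hv : trace v = 0) (huv : LinearIndependent K ![u, v]) : ⁅u, v⁆ ≠ 0 := by
  obtain ⟨a, b, c, rfl⟩ := exists_eq_of_trace_eq_zero_fin_two hu
  obtain ⟨p, q, r, rfl⟩ := exists_eq_of_trace_eq_zero_fin_two hv
  intro hlie
  rw [Ring.lie_def, mul_fin_two, mul_fin_two, sub_eq_zero] at hlie
  have h00 := congrFun (congrFun hlie 0) 0
  have h01 := congrFun (congrFun hlie 0) 1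
  have h10 := congrFun (congrFun hlie 1) 0
  simp only [of_apply, cons_val', cons_val_zero, cons_val_one, empty_val', cons_val_fin_one]
    at h00 h01 h10
  -- up to factors `2`, the entries of `⁅u, v⁆` are those of `(a, b, c) ⨯₃ (p, q, r)`
  have hcross : crossProduct ![a, b, c] ![p, q, r] = 0 := by
    ext i; fin_cases i <;> simp only [cross_apply] <;> simp
    · linear_combination h00
    · exact (mul_eq_zero.mp (by linear_combination h10 : (2 : K) * _ = 0)).resolve_left two_ne_zero
    · exact (mul_eq_zero.mp (by linear_combination h01 : (2 : K) * _ = 0)).resolve_left two_ne_zero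
  have hdep : ¬ LinearIndependent K ![![a, b, c], ![p, q, r]] := fun h =>
    crossProduct_ne_zero_iff_linearIndependent.mpr h hcross
  rw [LinearIndependent.pair_iff] at hdep huv
  push Not at hdep
  obtain ⟨s, t, hst, hne⟩ := hdep
  obtain ⟨hs, ht⟩ := huv s t (by
    have h0 := congrFun hst 0
    have h1 := congrFun hst 1
    have h2 := congrFun hst 2
    simp only [smul_cons, smul_eq_mul, smul_empty, Pi.add_apply, cons_val_zero, Pi.zero_apply,
      cons_val_one, cons_val] at h0 h1 h2
    ext i j; fin_cases i <;> fin_cases j <;> simp [h0, h1, h2, ← neg_add])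
  exact hne hs ht

end

theorem exists_conjAlgEquiv_eq_smul_of_mul_self_eq_zero {w : Matrix (Fin 2) (Fin 2) K}
    (hw : w ≠ 0) (hw2 : w * w = 0) (htr : trace w = 0) :
    ∃ g : SpecialLinearGroup (Fin 2) K, ∃ c : K,
      c ≠ 0 ∧ conjAlgEquiv g w = c • !![0, 1; 0, 0] := by
  obtain ⟨a, b, c, rfl⟩ := exists_eq_of_trace_eq_zero_fin_two htr
  have hdet : a * a + b * c = 0 := by simpa [mul_fin_two] using congrFun (congrFun hw2 0) 0
  by_cases hc : c = 0
  · obtain rfl : a = 0 := by simpa [hc] using hdet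
    refine ⟨1, b, fun hb => hw ?_, ?_⟩
    · ext i j; fin_cases i <;> fin_cases j <;> simp [hb, hc]
    · ext i j; fin_cases i <;> fin_cases j <;> simp [conjAlgEquiv_apply, hc]
  · -- `(a, c)` spans the kernel of `w`; it is the first column of `P = g⁻¹`
    let P : SpecialLinearGroup (Fin 2) K := ⟨!![a, -c⁻¹; c, 0], by simp [det_fin_two_of, hc]⟩
    refine ⟨P⁻¹, -c⁻¹, by simpa using hc, ?_⟩
    rw [conjAlgEquiv_apply, inv_inv, coe_inv]
    simp only [P, adjugate_fin_two_of, mul_fin_two]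
    ext i j; fin_cases i <;> fin_cases j <;> simp
    · ring
    · field_simp
    · linear_combination -c * hdet
    · exact Or.inl (by ring)

end Matrix

variable (K : Type*) [Field K]

def sl2Borel : Submodule K (Matrix (Fin 2) (Fin 2) K) :=
  Submodule.span K {!![1, 0; 0, -1], !![0, 1; 0, 0]}

variable {K}

theorem mem_sl2Borel_iff {y : Matrix (Fin 2) (Fin 2) K} :
    y ∈ sl2Borel K ↔ ∃ a b : K, y = !![a, b; 0, -a] := by
  have key (a b : K) : a • !![1, 0; 0, -1] + b • !![0, 1; 0, 0] = !![a, b; 0, -a] := by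
    ext i j; fin_cases i <;> fin_cases j <;> simp
  simp only [sl2Borel, Submodule.mem_span_pair, key, eq_comm]

theorem finrank_sl2Borel_le : finrank K (sl2Borel K) ≤ 2 := by
  rw [sl2Borel, ← range_cons_cons_empty _ _ ![]]
  exact finrank_range_le_card _

theorem conjAlgEquiv_mem_sl2Borel {g : SpecialLinearGroup (Fin 2) K}
    {w x : Matrix (Fin 2) (Fin 2) K} {c : K} (hc : c ≠ 0)
    (hg : conjAlgEquiv g w = c • !![0, 1; 0, 0]) (hx : trace x = 0) (hwx : trace (w * x) = 0) : conjAlgEquiv g x ∈ sl2Borel K := by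
  obtain ⟨a, b, d, hy⟩ :=
    exists_eq_of_trace_eq_zero_fin_two (x := conjAlgEquiv g x) (by rwa [trace_conjAlgEquiv])
  -- the trace pairing with `!![0, 1; 0, 0]` reads off the lower left entry
  have hcd : c * d = 0 := by
    rw [← trace_conjAlgEquiv g, map_mul, hg, hy] at hwx
    simpa [mul_fin_two, trace_fin_two] using hwx
  rw [hy, (mul_eq_zero.mp hcd).resolve_left hc, mem_sl2Borel_iff]
  exact ⟨a, b, rfl⟩

/-- Every 2-dimensional Lie subalgebra `h` of `sl(2,ℂ)` (a 2-dimensional subalgebra of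
the matrix Lie algebra consisting of trace-zero matrices) is noncommutative, and is
conjugate under `SL(2,ℂ)` to the subalgebra `{[[a,b],[0,-a]] : a, b ∈ ℂ}` of
upper-triangular trace-zero matrices. -/
theorem two_dim_subalgebra_sl2_conjugate_to_borel
    (h : LieSubalgebra ℂ (Matrix (Fin 2) (Fin 2) ℂ))
    (htr : ∀ x ∈ h, Matrix.trace x = 0)
    (hdim : Module.finrank ℂ h = 2) :
    (∃ x ∈ h, ∃ y ∈ h, ⁅x, y⁆ ≠ 0) ∧
    ∃ g : Matrix.SpecialLinearGroup (Fin 2) ℂ,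
      {y : Matrix (Fin 2) (Fin 2) ℂ | ∃ x ∈ h,
          y = (g : Matrix (Fin 2) (Fin 2) ℂ) * x * ((g⁻¹ : Matrix.SpecialLinearGroup (Fin 2) ℂ) : Matrix (Fin 2) (Fin 2) ℂ)}
        = {y : Matrix (Fin 2) (Fin 2) ℂ | ∃ a b : ℂ, y = !![a, b; 0, -a]} := by
  obtain ⟨u, v, huv, hspan⟩ := Submodule.exists_linearIndependent_pair_span_eq hdim
  have hu : u ∈ h := h.mem_toSubmodule.mp (hspan ▸ Submodule.subset_span (by simp))
  have hv : v ∈ h := h.mem_toSubmodule.mp (hspan ▸ Submodule.subset_span (by simp))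
  have hw : ⁅u, v⁆ ≠ 0 := lie_ne_zero_of_linearIndependent_fin_two (htr u hu) (htr v hv) huv
  have horth (x : Matrix (Fin 2) (Fin 2) ℂ) (hx : x ∈ h) : trace (⁅u, v⁆ * x) = 0 :=
    trace_lie_mul_eq_zero_of_mem_span_pair (hspan ▸ hx)
  have hwh : ⁅u, v⁆ ∈ h := h.lie_mem hu hv
  obtain ⟨g, c, hc, hg⟩ := exists_conjAlgEquiv_eq_smul_of_mul_self_eq_zero hw
    (mul_self_eq_zero_of_trace_eq_zero_fin_two (htr _ hwh) (horth _ hwh)) (htr _ hwh)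
  have hle : h.toSubmodule.map (conjAlgEquiv g).toLinearMap ≤ sl2Borel ℂ := by
    rintro _ ⟨x, hx, rfl⟩
    exact conjAlgEquiv_mem_sl2Borel hc hg (htr x hx) (horth x hx)
  have hborel := Submodule.eq_of_le_of_finrank_le hle <| by
    rw [← AlgEquiv.toLinearEquiv_toLinearMap, LinearEquiv.finrank_map_eq]
    exact finrank_sl2Borel_le.trans hdim.ge
  refine ⟨⟨u, hu, v, hv, hw⟩, g, ?_⟩
  ext y
  rw [Set.mem_ofPred_eq, Set.mem_ofPred_eq, ← mem_sl2Borel_iff, ← hborel, Submodule.mem_map]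
  simp only [AlgEquiv.toLinearMap_apply, conjAlgEquiv_apply, LieSubalgebra.mem_toSubmodule, eq_comm]
end
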